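/- Let S be a numerical semigroup with multiplicity e. If Ap_3 = ∅ (no element of the Apéry set has order 3), then D_k + e = C_{k+1} for each k ≥ 2. -/

import Mathlib

/-!
When `Ap_3 = ∅`, no element `u ∈ 3M` lies in the Apéry set: a smallest such `u` has order
`≥ 4`, so it splits as `u' + r` with `u' ∈ 3M`, `r ∈ M`, and `u'` is again in the Apéry set.
Hence for `l ≥ 3` every `s ∈ lM` has `s - e ∈ (l-2)M`. For `d ∈ D_k` this rules out
`ord (d + e) ≥ k + 2` (it would put `d` in `kM`), and for `s ∈ C_{k+1}` it puts `s - e` in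
`(k-1)M \ kM`, so `s - e` has order exactly `k - 1`.
-/

open Set

/-- A numerical semigroup: a cofinite submonoid of ℕ. -/
def IsNumSgp (S : Set ℕ) : Prop :=
  0 ∈ S ∧ (∀ a ∈ S, ∀ b ∈ S, a + b ∈ S) ∧ Sᶜ.Finite

/-- The maximal ideal `M = S \ {0}`. -/
def MS (S : Set ℕ) : Set ℕ := S \ {0}

/-- The multiplicity `e` of `S`, the smallest nonzero element. -/
noncomputable def mult (S : Set ℕ) : ℕ := sInf (MS S)

/-- `nM S h` is the set of sums of `h` elements of `M = S \ {0}` (with `nM S 0 = {0}`). -/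
def nM (S : Set ℕ) : ℕ → Set ℕ
  | 0 => {0}
  | k + 1 => {x | ∃ a ∈ MS S, ∃ b ∈ nM S k, x = a + b}

/-- The order of `s`: the largest `h` with `s ∈ hM`. -/
noncomputable def ordS (S : Set ℕ) (s : ℕ) : ℕ := sSup {h | s ∈ nM S h}

/-- The Apéry set of `S` with respect to the multiplicity `e`:
elements `s ∈ S` with `s - e ∉ S`. -/
def Ap (S : Set ℕ) : Set ℕ := {s ∈ S | ∀ t ∈ S, t + mult S ≠ s}

/-- Elements of the Apéry set of order `k`. -/
def ApK (S : Set ℕ) (k : ℕ) : Set ℕ := {s ∈ Ap S | ordS S s = k}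

/-- `C_k = {s ∈ S : ord s = k and s - e ∉ (k-1)M}`. -/
def CK (S : Set ℕ) (k : ℕ) : Set ℕ :=
  {s ∈ S | ordS S s = k ∧ ∀ t ∈ nM S (k - 1), t + mult S ≠ s}

/-- `D_k = {s ∈ S : ord s = k-1 and ord (s+e) > k}`. -/
def DK (S : Set ℕ) (k : ℕ) : Set ℕ :=
  {s ∈ S | ordS S s = k - 1 ∧ k < ordS S (s + mult S)}

/-- The Hilbert function of `R = k[[S]]`: `H(0) = 1`, `H(n) = |nM \ (n+1)M|`. -/
noncomputable def HF (S : Set ℕ) (n : ℕ) : ℕ := (nM S n \ nM S (n + 1)).ncard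

/-- The set of minimal generators of `S`. -/
def MinGens (S : Set ℕ) : Set ℕ :=
  MS S \ {x | ∃ a ∈ MS S, ∃ b ∈ MS S, x = a + b}

/-- `a` is a maximal representation of `s`: a finitely supported coefficient
function on the minimal generators with `Σ aⱼ nⱼ = s` and `Σ aⱼ = ord s`. -/
def IsMaxRep (S : Set ℕ) (s : ℕ) (a : ℕ →₀ ℕ) : Prop :=
  (↑a.support : Set ℕ) ⊆ MinGens S ∧
  (a.sum fun n c => c * n) = s ∧
  (a.sum fun _ c => c) = ordS S s

/-- `|Supp(s)|`: the maximal number of distinct minimal generators appearing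
in a maximal representation of `s`. -/
noncomputable def SuppCard (S : Set ℕ) (s : ℕ) : ℕ :=
  sSup {q | ∃ a : ℕ →₀ ℕ, IsMaxRep S s a ∧ a.support.card = q}

/-- The Frobenius number of `S`. -/
noncomputable def Frob (S : Set ℕ) : ℕ := sSup Sᶜ

variable {S : Set ℕ}

lemma pos_of_mem_MS {a : ℕ} (ha : a ∈ MS S) : 0 < a :=
  Nat.pos_of_ne_zero fun h => ha.2 (by simp [h])

lemma IsNumSgp.mult_mem_MS (hS : IsNumSgp S) : mult S ∈ MS S := by
  obtain ⟨m, hm⟩ := hS.2.2.bddAbove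
  have hmS : m + 1 ∈ S := by
    by_contra h
    have := hm (show m + 1 ∈ Sᶜ from h)
    omega
  exact Nat.sInf_mem ⟨m + 1, hmS, by simp⟩

lemma IsNumSgp.nM_subset (hS : IsNumSgp S) : ∀ h, nM S h ⊆ S
  | 0 => by simpa [nM] using hS.1
  | h + 1 => by
    rintro _ ⟨a, ha, b, hb, rfl⟩
    exact hS.2.1 a ha.1 b (hS.nM_subset h hb)

lemma le_of_mem_nM {h s : ℕ} (hs : s ∈ nM S h) : h ≤ s := by
  induction h generalizing s with
  | zero => exact Nat.zero_le _
  | succ h ih =>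
    obtain ⟨a, ha, b, hb, rfl⟩ := hs
    have := ih hb
    have := pos_of_mem_MS ha
    omega

lemma mul_mult_le_of_mem_nM {h s : ℕ} (hs : s ∈ nM S h) : h * mult S ≤ s := by
  induction h generalizing s with
  | zero => simp
  | succ h ih =>
    obtain ⟨a, ha, b, hb, rfl⟩ := hs
    have := ih hb
    have : mult S ≤ a := Nat.sInf_le ha
    rw [Nat.succ_mul]
    omega

lemma exists_add_of_mem_nM_add {i j s : ℕ} (hs : s ∈ nM S (i + j)) :
    ∃ u ∈ nM S i, ∃ r ∈ nM S j, s = u + r := by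
  induction i generalizing s with
  | zero => exact ⟨0, rfl, s, by simpa using hs, by simp⟩
  | succ i ih =>
    rw [Nat.succ_add] at hs
    obtain ⟨a, ha, b, hb, rfl⟩ := hs
    obtain ⟨u, hu, r, hr, rfl⟩ := ih hb
    exact ⟨a + u, ⟨a, ha, u, hu, rfl⟩, r, hr, by ring⟩

lemma IsNumSgp.nM_succ_subset (hS : IsNumSgp S) {h : ℕ} (hh : h ≠ 0) :
    nM S (h + 1) ⊆ nM S h := by
  obtain ⟨h, rfl⟩ := Nat.exists_eq_succ_of_ne_zero hh
  rintro _ ⟨a, ha, _, ⟨c, hc, d, hd, rfl⟩, rfl⟩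
  have := pos_of_mem_MS ha
  exact ⟨a + c, ⟨hS.2.1 a ha.1 c hc.1, by rw [mem_singleton_iff]; omega⟩, d, hd, by ring⟩

lemma IsNumSgp.nM_subset_nM (hS : IsNumSgp S) {i j : ℕ} (hi : i ≠ 0) (hij : i ≤ j) :
    nM S j ⊆ nM S i := by
  induction j, hij using Nat.le_induction with
  | base => exact subset_rfl
  | succ j hij ih => exact (hS.nM_succ_subset (by omega)).trans ih

lemma bddAbove_setOf_mem_nM (s : ℕ) : BddAbove {h | s ∈ nM S h} :=
  ⟨s, fun _ => le_of_mem_nM⟩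

lemma le_ordS_of_mem_nM {h s : ℕ} (hs : s ∈ nM S h) : h ≤ ordS S s :=
  le_csSup (bddAbove_setOf_mem_nM s) hs

lemma mem_nM_ordS {s : ℕ} (hs : s ∈ S) : s ∈ nM S (ordS S s) := by
  refine Nat.sSup_mem ?_ (bddAbove_setOf_mem_nM s)
  rcases eq_or_ne s 0 with rfl | hs0
  · exact ⟨0, rfl⟩
  · exact ⟨1, s, ⟨hs, hs0⟩, 0, rfl, rfl⟩

lemma IsNumSgp.mem_nM_of_le_ordS (hS : IsNumSgp S) {h s : ℕ} (hs : s ∈ S) (hh : h ≠ 0)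
    (hle : h ≤ ordS S s) : s ∈ nM S h :=
  hS.nM_subset_nM hh hle (mem_nM_ordS hs)

section NoAperyOfOrderThree

variable (hS : IsNumSgp S) (hAp3 : ApK S 3 = ∅)
include hS hAp3

lemma exists_add_mult_eq_of_mem_nM_three {u : ℕ} (hu : u ∈ nM S 3) :
    ∃ w ∈ S, w + mult S = u := by
  induction u using Nat.strong_induction_on with
  | _ u ih =>
  by_contra hAp
  have huAp : u ∈ Ap S := ⟨hS.nM_subset 3 hu, fun w hw hwu => hAp ⟨w, hw, hwu⟩⟩
  have hord : ordS S u ≠ 3 := fun h => eq_empty_iff_forall_notMem.mp hAp3 u ⟨huAp, h⟩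
  obtain ⟨m, hm⟩ : ∃ m, ordS S u = 3 + (m + 1) := ⟨ordS S u - 4, by
    have := le_ordS_of_mem_nM hu
    omega⟩
  obtain ⟨u', hu', r, hr, rfl⟩ := exists_add_of_mem_nM_add (hm ▸ mem_nM_ordS huAp.1)
  have := le_of_mem_nM hr
  obtain ⟨w, hw, rfl⟩ := ih u' (by omega) hu'
  exact hAp ⟨w + r, hS.2.1 w hw r (hS.nM_subset _ hr), by ring⟩

lemma exists_add_mult_eq_of_mem_nM {l s : ℕ} (hl : 3 ≤ l) (hs : s ∈ nM S l) :
    ∃ t ∈ nM S (l - 2), t + mult S = s := by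
  obtain ⟨m, rfl⟩ := Nat.exists_eq_add_of_le hl
  obtain ⟨u, hu, r, hr, rfl⟩ := exists_add_of_mem_nM_add hs
  obtain ⟨w, hw, rfl⟩ := exists_add_mult_eq_of_mem_nM_three hS hAp3 hu
  have := mul_mult_le_of_mem_nM hu
  have := pos_of_mem_MS hS.mult_mem_MS
  refine ⟨w + r, ?_, by ring⟩
  rw [show 3 + m - 2 = m + 1 by omega]
  exact ⟨w, ⟨hw, by rw [mem_singleton_iff]; omega⟩, r, hr, rfl⟩

lemma image_DK_subset_CK {k : ℕ} (hk : 2 ≤ k) :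
    (fun s => s + mult S) '' DK S k ⊆ CK S (k + 1) := by
  rintro _ ⟨d, ⟨hd, hord, hlt⟩, rfl⟩
  have hde : d + mult S ∈ S := hS.2.1 d hd _ hS.mult_mem_MS.1
  have hdk : d ∉ nM S k := fun h => by
    have := le_ordS_of_mem_nM h
    omega
  refine ⟨hde, ?_, fun t ht he => hdk (Nat.add_right_cancel he ▸ ht)⟩
  show ordS S (d + mult S) = k + 1
  by_contra hne
  obtain ⟨t, ht, he⟩ := exists_add_mult_eq_of_mem_nM hS hAp3 (by omega) (mem_nM_ordS hde)
  have := le_ordS_of_mem_nM (Nat.add_right_cancel he ▸ ht)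
  omega

lemma CK_subset_image_DK {k : ℕ} (hk : 2 ≤ k) :
    CK S (k + 1) ⊆ (fun s => s + mult S) '' DK S k := by
  rintro s ⟨hs, hord, hC⟩
  obtain ⟨t, ht, rfl⟩ := exists_add_mult_eq_of_mem_nM hS hAp3 (by omega) (hord ▸ mem_nM_ordS hs)
  have htS := hS.nM_subset _ ht
  have htk : ¬ k ≤ ordS S t := fun h => hC t (hS.mem_nM_of_le_ordS htS (by omega) h) rfl
  have := le_ordS_of_mem_nM ht
  exact ⟨t, ⟨htS, by omega, by omega⟩, rfl⟩

end NoAperyOfOrderThree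

theorem stmt7 (S : Set ℕ) (hS : IsNumSgp S) (hAp3 : ApK S 3 = ∅)
    (k : ℕ) (hk : 2 ≤ k) :
    (fun s => s + mult S) '' DK S k = CK S (k + 1) :=
  (image_DK_subset_CK hS hAp3 hk).antisymm (CK_subset_image_DK hS hAp3 hk)
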